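/- arXiv:1902.07665 — 9 statements merged into one kernel-verified Lean document; each statement's English description precedes it below -/
import Mathlib

section
/- Let A be a finite subset of ℝ^d and L ∈ GL(d,ℝ). If |A + L(A)| ≤ c|A| for some positive real c, then |A + A| ≤ c⁶|A|. -/
/-!
An injective additive map does not change the size of a sumset, so `|A + A| = |L(A) + L(A)|`.
The Plünnecke–Ruzsa inequality, with `A` as the auxiliary set, bounds this by
`|A + L(A)|² / |A| ≤ c² |A|`, and `c ≥ 1` because `|A| ≤ |A + L(A)|`.
-/

open Pointwise

namespace Finset

variable {α β F : Type*} [DecidableEq α] [DecidableEq β]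

lemma card_image_add_image_of_injective [Add α] [Add β] [FunLike F α β] [AddHomClass F α β]
    {f : F} (hf : Function.Injective f) (s t : Finset α) :
    #(s.image f + t.image f) = #(s + t) := by
  rw [← image_add, card_image_of_injective _ hf]

lemma card_add_self_le_sq_div [AddCommGroup α] {A : Finset α} (hA : A.Nonempty) (B : Finset α) :
    (#(B + B) : ℝ) ≤ (#(A + B) : ℝ) ^ 2 / #A := by
  have hPR : (#(B + B) : ℝ) ≤ (#(A + B) / #A : ℝ) ^ 2 * #A := by
    simpa [two_nsmul] using
      (NNRat.cast_le (K := ℝ)).2 (pluennecke_ruzsa_inequality_nsmul_add hA B 2)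
  have hA₀ : (#A : ℝ) ≠ 0 := by positivity
  calc (#(B + B) : ℝ) ≤ (#(A + B) / #A : ℝ) ^ 2 * #A := hPR
    _ = (#(A + B) : ℝ) ^ 2 / #A := by field_simp

end Finset

open Finset in
theorem stmt1_general (d : ℕ) (c : ℝ)
    (L : (Fin d → ℝ) →ₗ[ℝ] (Fin d → ℝ)) (hL : Function.Bijective L)
    (A : Finset (Fin d → ℝ)) (hA : A.Nonempty)
    (h : ((A + A.image L).card : ℝ) ≤ c * A.card) :
    ((A + A).card : ℝ) ≤ c ^ 6 * A.card := by
  have hA₀ : (0 : ℝ) < #A := by exact_mod_cast hA.card_pos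
  have hc : 1 ≤ c := by
    have : (#A : ℝ) ≤ #(A + A.image L) := by exact_mod_cast card_le_card_add_right (hA.image L)
    nlinarith
  calc (#(A + A) : ℝ) = #(A.image L + A.image L) := by
        rw [card_image_add_image_of_injective hL.injective]
    _ ≤ (#(A + A.image L) : ℝ) ^ 2 / #A := card_add_self_le_sq_div hA _
    _ ≤ (c * #A) ^ 2 / #A := by gcongr
    _ = c ^ 2 * #A := by field_simp
    _ ≤ c ^ 6 * #A := by gcongr; norm_num

/-- If `A ⊆ ℝ^d` is finite nonempty, `L ∈ GL(d, ℝ)` and `|A + L(A)| ≤ c|A|`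
for some `c > 0`, then `|A + A| ≤ c⁶|A|`. -/
theorem stmt1 (d : ℕ) (c : ℝ) (hc : 0 < c)
    (L : (Fin d → ℝ) →ₗ[ℝ] (Fin d → ℝ)) (hL : Function.Bijective L)
    (A : Finset (Fin d → ℝ)) (hA : A.Nonempty)
    (h : ((A + A.image L).card : ℝ) ≤ c * A.card) :
    ((A + A).card : ℝ) ≤ c ^ 6 * A.card :=
  stmt1_general d c L hL A hA h
end

section
/- Let A be a finite subset of ℝ^d and L ∈ GL(d,ℝ). If |A + L(A)| ≤ c|A| for some positive real c, then |A − A| ≤ c²|A|. -/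
open Pointwise Finset

theorem Finset.card_sub_self_le_of_card_add_le {G : Type*} [AddGroup G] [DecidableEq G]
    {A B : Finset G} {c : ℝ} (hBA : #B = #A) (h : (#(A + B) : ℝ) ≤ c * #A) :
    (#(A - A) : ℝ) ≤ c ^ 2 * #A := by
  obtain rfl | hA := A.eq_empty_or_nonempty
  · simp
  have hApos : (0 : ℝ) < #A := by exact_mod_cast hA.card_pos
  have ruzsa : (#(A - A) : ℝ) * #A ≤ #(A + B) * #(A + B) := by
    exact_mod_cast hBA ▸ ruzsa_triangle_inequality_sub_add_add A B A
  refine le_of_mul_le_mul_right ?_ hApos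
  calc (#(A - A) : ℝ) * #A ≤ #(A + B) * #(A + B) := ruzsa
    _ ≤ (c * #A) * (c * #A) := mul_le_mul h h (by positivity) ((Nat.cast_nonneg _).trans h)
    _ = c ^ 2 * #A * #A := by ring

theorem stmt2_general (d : ℕ) (c : ℝ)
    (L : (Fin d → ℝ) →ₗ[ℝ] (Fin d → ℝ)) (hL : Function.Bijective L)
    (A : Finset (Fin d → ℝ))
    (h : ((A + A.image L).card : ℝ) ≤ c * A.card) :
    ((A - A).card : ℝ) ≤ c ^ 2 * A.card :=
  card_sub_self_le_of_card_add_le (card_image_of_injective A hL.injective) h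

/-- If `A ⊆ ℝ^d` is finite nonempty, `L ∈ GL(d, ℝ)` and `|A + L(A)| ≤ c|A|`
for some `c > 0`, then `|A − A| ≤ c²|A|`. -/
theorem stmt2 (d : ℕ) (c : ℝ) (hc : 0 < c)
    (L : (Fin d → ℝ) →ₗ[ℝ] (Fin d → ℝ)) (hL : Function.Bijective L)
    (A : Finset (Fin d → ℝ)) (hA : A.Nonempty)
    (h : ((A + A.image L).card : ℝ) ≤ c * A.card) :
    ((A - A).card : ℝ) ≤ c ^ 2 * A.card :=
  stmt2_general d c L hL A h
end

section
/- For every natural number N ≥ 1 and integers q, s with q, s ≥ 1, the set A_N = {e₁, …, e_d} ∪ {2e₁, …, Ne₁} ⊆ ℤ^d (where e₁,…,e_d is the standard basis) satisfies |q·A_N + s·A_N| ≤ (q + s + 2d − 2)|A_N| + C for some constant C depending only on q, s, d. -/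
/-!
Write `A_N = L ∪ P` with `L = {e₁, 2e₁, …, Ne₁}` and `P = {e₂, …, e_d}`. Then `q·L + s·L` lies in the
progression `{0, e₁, …, (q + s)N e₁}`, while each of the three mixed sums `q·L + s·P`, `q·P + s·L`,
`q·P + s·P` has at most `|L||P| ≤ N(d - 1)` resp. `(d - 1)²` elements. Altogether
`|q·A_N + s·A_N| ≤ (q + s + 2d - 2) N + (d - 1)² + 1`, and `N ≤ |A_N|`.
-/

open Pointwise Finset

theorem Finset.card_image_add_image_union_le {G H : Type*} [DecidableEq G] [DecidableEq H] [Add H]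
    (f g : G → H) (L P : Finset G) :
    #((L ∪ P).image f + (L ∪ P).image g) ≤ #(L.image f + L.image g) + 2 * #L * #P + #P ^ 2 := by
  have hmixed : ∀ X Y : Finset G, #(X.image f + Y.image g) ≤ #X * #Y := fun X Y =>
    card_add_le.trans (Nat.mul_le_mul card_image_le card_image_le)
  rw [image_union, image_union, union_add, add_union, add_union]
  calc #(L.image f + L.image g ∪ (L.image f + P.image g) ∪
        (P.image f + L.image g ∪ (P.image f + P.image g)))
      ≤ #(L.image f + L.image g) + #(L.image f + P.image g) +
          (#(P.image f + L.image g) + #(P.image f + P.image g)) :=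
        (card_union_le _ _).trans (Nat.add_le_add (card_union_le _ _) (card_union_le _ _))
    _ ≤ #(L.image f + L.image g) + #L * #P + (#P * #L + #P * #P) := by
        gcongr <;> apply hmixed
    _ = #(L.image f + L.image g) + 2 * #L * #P + #P ^ 2 := by ring

section AddCommGroup

variable {G : Type*} [AddCommGroup G] [DecidableEq G]

theorem card_image_smul_add_image_smul_le {L : Finset G} {v : G} {N : ℕ}
    (hL : L ⊆ (Icc 1 N).image fun k : ℕ => (k : ℤ) • v) {q s : ℤ} (hq : 0 ≤ q) (hs : 0 ≤ s) :
    (#(L.image (q • ·) + L.image (s • ·)) : ℤ) ≤ (q + s) * N + 1 := by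
  have hsub : L.image (q • ·) + L.image (s • ·) ⊆ (Icc 0 ((q + s) * N)).image (· • v) := by
    refine (add_subset_add (image_subset_image hL) (image_subset_image hL)).trans ?_
    simp only [image_image, add_subset_iff, mem_image, mem_Icc]
    rintro _ ⟨k, ⟨-, hk⟩, rfl⟩ _ ⟨l, ⟨-, hl⟩, rfl⟩
    refine ⟨q * k + s * l, ⟨by positivity, ?_⟩, by simp only [Function.comp, add_smul, mul_smul]⟩
    have hk' : (k : ℤ) ≤ N := by exact_mod_cast hk
    have hl' : (l : ℤ) ≤ N := by exact_mod_cast hl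
    nlinarith
  calc (#(L.image (q • ·) + L.image (s • ·)) : ℤ) ≤ #(Icc 0 ((q + s) * N)) := by
        exact_mod_cast (card_le_card hsub).trans card_image_le
    _ = (q + s) * N + 1 := by rw [Int.card_Icc, sub_zero, Int.toNat_of_nonneg (by positivity)]

theorem card_image_Icc_smul [Module.IsTorsionFree ℤ G] {v : G} (hv : v ≠ 0) (N : ℕ) :
    #((Icc 1 N).image fun k : ℕ => (k : ℤ) • v) = N := by
  rw [card_image_of_injective _ fun k l h => Nat.cast_injective (smul_left_injective ℤ hv h),
    Nat.card_Icc, Nat.add_sub_cancel]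

theorem image_univ_union_image_Icc_two {ι : Type*} [Fintype ι] [DecidableEq ι] (e : ι → G)
    (i₀ : ι) {N : ℕ} (hN : 1 ≤ N) :
    univ.image e ∪ (Icc 2 N).image (fun k : ℕ => (k : ℤ) • e i₀) =
      (Icc 1 N).image (fun k : ℕ => (k : ℤ) • e i₀) ∪ (univ.erase i₀).image e := by
  rw [← insert_erase (mem_univ i₀), ← insert_Icc_add_one_left_eq_Icc hN, image_insert,
    image_insert, erase_insert (notMem_erase _ _), Nat.cast_one,
    one_smul, insert_union, insert_union, union_comm, one_add_one_eq_two]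

end AddCommGroup

/-- For `d ≥ 1` and integers `q, s ≥ 1`, the sets
`A_N = {e₁, …, e_d} ∪ {2e₁, …, Ne₁} ⊆ ℤ^d` satisfy
`|q·A_N + s·A_N| ≤ (q + s + 2d − 2)|A_N| + C` for a constant `C = C(q,s,d)`. -/
theorem stmt3 (d : ℕ) (hd : 1 ≤ d) (q s : ℤ) (hq : 1 ≤ q) (hs : 1 ≤ s) :
    ∃ C : ℝ, ∀ N : ℕ, 1 ≤ N → ∀ A : Finset (Fin d → ℤ),
      A = (Finset.univ.image fun i : Fin d => (Pi.single i 1 : Fin d → ℤ)) ∪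
          ((Finset.Icc 2 N).image fun k : ℕ =>
            ((k : ℤ) • Pi.single (⟨0, hd⟩ : Fin d) 1 : Fin d → ℤ)) →
      (((A.image fun x => q • x) + (A.image fun x => s • x)).card : ℝ) ≤
        ((q : ℝ) + (s : ℝ) + 2 * d - 2) * A.card + C := by
  refine ⟨((d : ℝ) - 1) ^ 2 + 1, fun N hN A hA => ?_⟩
  set i₀ : Fin d := ⟨0, hd⟩
  rw [image_univ_union_image_Icc_two _ i₀ hN] at hA
  subst hA
  set L := (Icc 1 N).image fun k : ℕ => (k : ℤ) • (Pi.single i₀ 1 : Fin d → ℤ)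
  set P := (univ.erase i₀).image fun i : Fin d => (Pi.single i 1 : Fin d → ℤ)
  have hLL : (#(L.image (q • ·) + L.image (s • ·)) : ℝ) ≤ (q + s) * N + 1 := by
    have h := card_image_smul_add_image_smul_le (subset_refl L) (q := q) (s := s)
      (by omega) (by omega)
    exact_mod_cast h
  have hL : #L = N := card_image_Icc_smul (Pi.single_ne_zero_iff.2 one_ne_zero) N
  have hP : (#P : ℝ) ≤ d - 1 := by
    have h : #P ≤ d - 1 := card_image_le.trans_eq (by simp)
    rw [← Nat.cast_one, ← Nat.cast_sub hd]
    exact_mod_cast h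
  have hA : (N : ℝ) ≤ #(L ∪ P) := by
    exact_mod_cast hL ▸ card_le_card (subset_union_left (s₁ := L) (s₂ := P))
  have hsplit : (#((L ∪ P).image (q • ·) + (L ∪ P).image (s • ·)) : ℝ) ≤
      #(L.image (q • ·) + L.image (s • ·)) + 2 * N * #P + #P ^ 2 := by
    exact_mod_cast hL ▸ card_image_add_image_union_le (q • ·) (s • ·) L P
  have hcoeff : (0 : ℝ) ≤ q + s + 2 * d - 2 := by
    have : (1 : ℝ) ≤ d := by exact_mod_cast hd
    have : (1 : ℝ) ≤ q := by exact_mod_cast hq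
    have : (1 : ℝ) ≤ s := by exact_mod_cast hs
    linarith
  nlinarith [mul_le_mul_of_nonneg_left hA hcoeff, (Nat.cast_nonneg #P : (0 : ℝ) ≤ #P)]
end

section
/- Let A, B be finite nonempty subsets of ℝ², let l be a line through the origin, let r₁ be the number of lines parallel to l meeting A and r₂ the number of lines parallel to l meeting B. Then |A + B| ≥ (|A|/r₁ + |B|/r₂ − 1)(r₁ + r₂ − 1). -/
/-!
Choose a linear map `f : ℝ² → ℝ` with kernel `l`; the lines parallel to `l` are its fibres. For
`x ∈ f(A)`, `y ∈ f(B)` the fibres satisfy `|A_x| + |B_y| - 1 ≤ |(A + B)_{x+y}|` by Cauchy–Davenport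
in the torsion-free group `ℝ²`. Summing these inequalities is done by a weighted Cauchy–Davenport
argument on the ordered sets `f(A)`, `f(B)`: by induction, delete the largest element of one of
them; its sum with the largest element of the other is then lost from the sumset, and for one of
the two choices this loss pays for the change in the average fibre sizes.
-/

open Pointwise Finset

section WeightedCauchyDavenport

variable {α : Type*} [AddCommMonoid α] [LinearOrder α]

/-- With `a`, `b`, `c` the fibre sizes of `A`, `B`, `A + B` over `X = f(A)`, `Y = f(B)`, this is
the Grynkiewicz–Serra inequality. -/
def WeightedBound (a b c : α → ℝ) (X Y : Finset α) : Prop :=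
  ((∑ x ∈ X, a x) / #X + (∑ y ∈ Y, b y) / #Y - 1) * (#X + #Y - 1) ≤ ∑ z ∈ X + Y, c z

lemma WeightedBound.symm {a b c : α → ℝ} {X Y : Finset α} (h : WeightedBound a b c X Y) :
    WeightedBound b a c Y X := by
  unfold WeightedBound at *
  rw [add_comm Y]
  linarith

variable [IsOrderedCancelAddMonoid α]

lemma weightedBound_singleton_left {a b c : α → ℝ} {x : α} {Y : Finset α} (hY : Y.Nonempty)
    (habc : ∀ y ∈ Y, a x + b y - 1 ≤ c (x + y)) : WeightedBound a b c {x} Y := by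
  have hn : (#Y : ℝ) ≠ 0 := by exact_mod_cast hY.card_pos.ne'
  unfold WeightedBound
  rw [singleton_add, ← image_vadd]
  simp_rw [vadd_eq_add]
  rw [sum_image fun _ _ _ _ h => add_left_cancel h]
  calc ((∑ x' ∈ {x}, a x') / #{x} + (∑ y ∈ Y, b y) / #Y - 1) * (#{x} + #Y - 1)
      = ∑ y ∈ Y, (a x + b y - 1) := by
        rw [sum_singleton, card_singleton, sum_sub_distrib, sum_add_distrib, sum_const, sum_const]
        field_simp
        ring
    _ ≤ ∑ y ∈ Y, c (x + y) := sum_le_sum habc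

lemma max'_add_max'_notMem_erase_add {X Y : Finset α} (hX : X.Nonempty) (hY : Y.Nonempty) :
    X.max' hX + Y.max' hY ∉ X.erase (X.max' hX) + Y := by
  simp only [mem_add, not_exists, not_and]
  intro x hx y hy
  exact (add_lt_add_of_lt_of_le (X.lt_max'_of_mem_erase_max' hX hx) (Y.le_max' y hy)).ne

lemma WeightedBound.of_erase_max' {a b c : α → ℝ} {X Y : Finset α} (hX : X.Nonempty)
    (hY : Y.Nonempty) (hX₂ : X.Nontrivial) (hc : ∀ z ∈ X + Y, 0 ≤ c z)
    (hmax : a (X.max' hX) + b (Y.max' hY) - 1 ≤ c (X.max' hX + Y.max' hY))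
    (hD : 0 ≤ (#Y - 1) * ((∑ x ∈ X, a x) / #X - a (X.max' hX))
      + (#X - 1) * (b (Y.max' hY) - (∑ y ∈ Y, b y) / #Y))
    (h : WeightedBound a b c (X.erase (X.max' hX)) Y) : WeightedBound a b c X Y := by
  set p := X.max' hX
  set q := Y.max' hY
  have hsplit : ∑ z ∈ X.erase p + Y, c z + c (p + q) ≤ ∑ z ∈ X + Y, c z := by
    rw [add_comm, ← sum_insert (max'_add_max'_notMem_erase_add hX hY)]
    refine sum_le_sum_of_subset_of_nonneg (insert_subset ?_ ?_) fun z hz _ => hc z hz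
    · exact add_mem_add (X.max'_mem hX) (Y.max'_mem hY)
    · exact add_subset_add_right (erase_subset _ _)
  unfold WeightedBound at *
  rw [sum_erase_eq_sub (X.max'_mem hX), cast_card_erase_of_mem (X.max'_mem hX)] at h
  have hm : (1 : ℝ) < #X := by exact_mod_cast one_lt_card_iff_nontrivial.2 hX₂
  have hn : (0 : ℝ) < #Y := by exact_mod_cast hY.card_pos
  set S := ∑ x ∈ X, a x
  set T := ∑ y ∈ Y, b y
  have hgain : ((S - a p) / (#X - 1) + T / #Y - 1) * (#X - 1 + #Y - 1) + (a p + b q - 1)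
      - (S / #X + T / #Y - 1) * (#X + #Y - 1)
      = ((#Y - 1) * (S / #X - a p) + (#X - 1) * (b q - T / #Y)) / (#X - 1) := by
    field_simp [(sub_pos.2 hm).ne']
    ring
  have := div_nonneg hD (sub_pos.2 hm).le
  linarith

theorem weightedBound_of_forall_add_sub_one_le {a b c : α → ℝ} {X Y : Finset α}
    (hX : X.Nonempty) (hY : Y.Nonempty) (hc : ∀ z ∈ X + Y, 0 ≤ c z)
    (habc : ∀ x ∈ X, ∀ y ∈ Y, a x + b y - 1 ≤ c (x + y)) :
    WeightedBound a b c X Y := by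
  induction hN : #X + #Y using Nat.strong_induction_on generalizing a b X Y with
  | _ N ih =>
  -- The quantity in `hD` changes sign when the roles of `X` and `Y` are swapped.
  wlog hD : 0 ≤ (#Y - 1) * ((∑ x ∈ X, a x) / #X - a (X.max' hX))
      + (#X - 1) * (b (Y.max' hY) - (∑ y ∈ Y, b y) / #Y) generalizing a b X Y
  · refine (this hY hX (add_comm X Y ▸ hc) (fun y hy x hx => ?_) (by omega) (by linarith)).symm
    simpa only [add_comm] using habc x hx y hy
  obtain ⟨x, rfl⟩ | hX₂ := hX.exists_eq_singleton_or_nontrivial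
  · exact weightedBound_singleton_left hY (habc x (mem_singleton_self x))
  refine WeightedBound.of_erase_max' hX hY hX₂ hc
    (habc _ (X.max'_mem hX) _ (Y.max'_mem hY)) hD (ih _ ?_ ?_ hY ?_ ?_ rfl)
  · rw [card_erase_of_mem (X.max'_mem hX)]
    have := hX.card_pos
    omega
  · exact hX₂.erase_nonempty
  · exact fun z hz => hc z (add_subset_add_right (erase_subset _ _) hz)
  · exact fun x hx => habc x (mem_of_mem_erase hx)

end WeightedCauchyDavenport

section Fibres

variable {G : Type*} [AddCommGroup G] [IsAddTorsionFree G] [DecidableEq G]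

lemma card_fiber_add_card_fiber_sub_one_le {H : Type*} [AddZeroClass H] [DecidableEq H]
    (f : G →+ H) {A B : Finset G} {x y : H} (hx : x ∈ A.image f) (hy : y ∈ B.image f) :
    (#{p ∈ A | f p = x} : ℝ) + #{q ∈ B | f q = y} - 1 ≤ #{r ∈ A + B | f r = x + y} := by
  have hAx : ({p ∈ A | f p = x}).Nonempty := by
    obtain ⟨p, hp, rfl⟩ := mem_image.1 hx
    exact ⟨p, mem_filter.2 ⟨hp, rfl⟩⟩
  have hBy : ({q ∈ B | f q = y}).Nonempty := by
    obtain ⟨q, hq, rfl⟩ := mem_image.1 hy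
    exact ⟨q, mem_filter.2 ⟨hq, rfl⟩⟩
  have hsub : {p ∈ A | f p = x} + {q ∈ B | f q = y} ⊆ {r ∈ A + B | f r = x + y} := by
    intro r hr
    obtain ⟨p, hp, q, hq, rfl⟩ := mem_add.1 hr
    rw [mem_filter] at hp hq ⊢
    exact ⟨add_mem_add hp.1 hq.1, by rw [map_add, hp.2, hq.2]⟩
  have hCD := (cauchy_davenport_of_isAddTorsionFree hAx hBy).trans (card_le_card hsub)
  have := hAx.card_pos
  rw [← Nat.cast_le (α := ℝ), Nat.cast_sub (by omega), Nat.cast_add, Nat.cast_one] at hCD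
  exact hCD

theorem grynkiewicz_serra {α : Type*} [AddCommMonoid α] [LinearOrder α]
    [IsOrderedCancelAddMonoid α] (f : G →+ α) {A B : Finset G} (hA : A.Nonempty)
    (hB : B.Nonempty) :
    ((#A : ℝ) / #(A.image f) + #B / #(B.image f) - 1) * (#(A.image f) + #(B.image f) - 1)
      ≤ #(A + B) := by
  have hcard : ∀ C : Finset G, (#C : ℝ) = ∑ x ∈ C.image f, (#{p ∈ C | f p = x} : ℝ) := by
    intro C
    exact_mod_cast card_eq_sum_card_image f C
  have h := weightedBound_of_forall_add_sub_one_le (a := fun x => #{p ∈ A | f p = x})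
    (b := fun y => #{q ∈ B | f q = y}) (c := fun z => #{r ∈ A + B | f r = z})
    (hA.image f) (hB.image f) (fun _ _ => by positivity)
    fun x hx y hy => card_fiber_add_card_fiber_sub_one_le f hx hy
  rwa [WeightedBound, ← image_add, ← hcard, ← hcard, ← hcard] at h

end Fibres

/-- Grynkiewicz–Serra: let `A, B` be finite nonempty subsets of `ℝ²`, `l` a line
through the origin (spanned by `v ≠ 0`), `r₁` the number of lines parallel to `l`
meeting `A` (i.e. the number of cosets of `l` meeting `A`) and `r₂` the number of
lines parallel to `l` meeting `B`. Then
`|A + B| ≥ (|A|/r₁ + |B|/r₂ − 1)(r₁ + r₂ − 1)`. -/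
theorem stmt8 (A B : Finset (ℝ × ℝ)) (hA : A.Nonempty) (hB : B.Nonempty)
    (v : ℝ × ℝ) (hv : v ≠ 0) (r₁ r₂ : ℕ)
    (h₁ : r₁ = ((Submodule.span ℝ {v}).mkQ '' (A : Set (ℝ × ℝ))).ncard)
    (h₂ : r₂ = ((Submodule.span ℝ {v}).mkQ '' (B : Set (ℝ × ℝ))).ncard) :
    ((A.card : ℝ) / r₁ + (B.card : ℝ) / r₂ - 1) * (r₁ + r₂ - 1) ≤ ((A + B).card : ℝ) := by
  set l := Submodule.span ℝ {v}
  have hrank : Module.finrank ℝ ((ℝ × ℝ) ⧸ l) = Module.finrank ℝ ℝ := by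
    have := l.finrank_quotient_add_finrank
    rw [finrank_span_singleton hv, Module.finrank_prod, Module.finrank_self] at this
    rw [Module.finrank_self]
    omega
  let e := LinearEquiv.ofFinrankEq _ _ hrank
  let f : ℝ × ℝ →+ ℝ := (e.toLinearMap ∘ₗ l.mkQ).toAddMonoidHom
  have hr : ∀ C : Finset (ℝ × ℝ), (l.mkQ '' (C : Set (ℝ × ℝ))).ncard = #(C.image f) := by
    intro C
    rw [← Set.ncard_image_of_injective _ e.injective, ← Set.image_comp, ← Set.ncard_coe_finset,
      coe_image]
    rfl
  rw [h₁, h₂, hr, hr]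
  exact grynkiewicz_serra f hA hB
end

section
/- Let A, B be finite nonempty subsets of ℝ^d with |A| ≥ |B| and such that A + B has affine dimension d. Then |A + B| ≥ |A| + d|B| − d(d+1)/2. -/
/-!
Induct on `|B|`. Take a linear functional `φ` with unique maximisers `v ∈ A`, `w ∈ B`, remove
them, and let `X = (A + B) \ (A' + B')` be the set of sums that are lost. If the dimension does
not drop, `X` affinely spans `A + B`, so `|X| ≥ d + 1`: given a functional `ψ` constant on `X`, tilt
it by a multiple of `φ` until `v + w` stops being the unique maximiser on `A + B`; the new maximiser
of largest `φ`-value is not a sum `a' + b'` (else `a' + w` would beat it), so it lies in `X`, which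
forces the tilt to be nonpositive, i.e. `ψ ≤ ψ (v + w)` on `A + B`. If the dimension drops by one,
`v + B` or `A + w` lies in `X`; if it drops by two, both do and they meet only in `v + w`. In each
case the bound for `A'`, `B'` lifts to `A`, `B`.
-/

open Pointwise Finset Module

section LinearAlgebra

variable {𝕜 V : Type*} [Field 𝕜] [AddCommGroup V] [Module 𝕜 V]

theorem Module.exists_dual_injOn [Infinite 𝕜] {s : Set V} (hs : s.Finite) :
    ∃ φ : Dual 𝕜 V, Set.InjOn φ s := by
  have : Finite s := hs
  obtain ⟨φ, hφ⟩ := exists_dual_forall_apply_ne_zero (K := 𝕜)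
    (fun p : {p : s × s // p.1 ≠ p.2} ↦ (p.1.1 : V) - p.1.2)
    fun p ↦ sub_ne_zero.2 (Subtype.coe_injective.ne p.2)
  refine ⟨φ, fun x hx y hy hxy ↦ by_contra fun hne ↦ hφ ⟨(⟨x, hx⟩, ⟨y, hy⟩), ?_⟩ ?_⟩
  · simpa using hne
  · simp [hxy]

theorem Finset.Nonempty.exists_forall_mem_erase_lt_of_injOn {α β : Type*} [DecidableEq α]
    [LinearOrder β] {s : Finset α} (hs : s.Nonempty) {f : α → β} (hf : Set.InjOn f s) :
    ∃ x ∈ s, ∀ y ∈ s.erase x, f y < f x := by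
  obtain ⟨x, hx, hmax⟩ := s.exists_max_image f hs
  exact ⟨x, hx, fun y hy ↦ (hmax y (mem_of_mem_erase hy)).lt_of_ne
    fun h ↦ ne_of_mem_erase hy (hf (mem_of_mem_erase hy) hx h)⟩

instance (s : Finset V) : FiniteDimensional 𝕜 (vectorSpan 𝕜 (s : Set V)) :=
  finiteDimensional_vectorSpan_of_finite 𝕜 s.finite_toSet

theorem finrank_vectorSpan_add_one_le_card [DecidableEq V] {s : Finset V} (hs : s.Nonempty) :
    finrank 𝕜 (vectorSpan 𝕜 (s : Set V)) + 1 ≤ #s := by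
  have := hs.card_pos
  have h := finrank_vectorSpan_image_finset_le 𝕜 id s (n := #s - 1) (by omega)
  rw [image_id] at h
  omega

theorem AffineSubspace.sub_add_mem (s : AffineSubspace 𝕜 V) {p q r : V} (hp : p ∈ s) (hq : q ∈ s)
    (hr : r ∈ s) : p - q + r ∈ s := by
  simpa using s.smul_vsub_vadd_mem 1 hp hq hr

theorem insert_add_insert_subset_affineSpan {A B : Set V} {a b : V} (ha : a ∈ A) (hb : b ∈ B)
    (v w : V) :
    insert v A + insert w B ⊆ affineSpan 𝕜 (insert (v + b) (insert (a + w) (A + B))) := by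
  set E := affineSpan 𝕜 (insert (v + b) (insert (a + w) (A + B)))
  have hE : ∀ {x y}, x ∈ A → y ∈ B → x + y ∈ E := fun hx hy ↦
    subset_affineSpan 𝕜 _ (.inr (.inr (Set.add_mem_add hx hy)))
  have hvb : v + b ∈ E := subset_affineSpan 𝕜 _ (.inl rfl)
  have haw : a + w ∈ E := subset_affineSpan 𝕜 _ (.inr (.inl rfl))
  rintro _ ⟨x, hx, y, hy, rfl⟩
  simp only [SetLike.mem_coe]
  rcases hx with rfl | hx <;> rcases hy with rfl | hy
  · convert E.sub_add_mem hvb (hE ha hb) haw using 1; abel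
  · convert E.sub_add_mem hvb (hE ha hb) (hE ha hy) using 1; abel
  · convert E.sub_add_mem haw (hE ha hb) (hE hx hb) using 1; abel
  · exact hE hx hy

theorem finrank_vectorSpan_le_of_subset_affineSpan {s t : Set V}
    [FiniteDimensional 𝕜 (vectorSpan 𝕜 t)] (h : s ⊆ affineSpan 𝕜 t) :
    finrank 𝕜 (vectorSpan 𝕜 s) ≤ finrank 𝕜 (vectorSpan 𝕜 t) := by
  apply Submodule.finrank_mono
  simpa only [direction_affineSpan] using AffineSubspace.direction_le (affineSpan_le.2 h)

variable [DecidableEq V] {A B : Finset V} {v w : V}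

theorem finrank_vectorSpan_add_le_finrank_insert_insert (hv : v ∈ A) (hw : w ∈ B) {a b : V}
    (ha : a ∈ A.erase v) (hb : b ∈ B.erase w) :
    finrank 𝕜 (vectorSpan 𝕜 ((A + B : Finset V) : Set V)) ≤ finrank 𝕜 (vectorSpan 𝕜
      (insert (v + b) (insert (a + w) ((A.erase v + B.erase w : Finset V) : Set V)))) := by
  apply finrank_vectorSpan_le_of_subset_affineSpan
  have := insert_add_insert_subset_affineSpan (𝕜 := 𝕜) (mem_coe.2 ha) (mem_coe.2 hb) v w
  rwa [← coe_insert, ← coe_insert, insert_erase hv, insert_erase hw, ← coe_add,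
    ← coe_add] at this

theorem finrank_vectorSpan_add_le_add_two (hv : v ∈ A) (hw : w ∈ B) {a b : V}
    (ha : a ∈ A.erase v) (hb : b ∈ B.erase w) :
    finrank 𝕜 (vectorSpan 𝕜 ((A + B : Finset V) : Set V)) ≤
      finrank 𝕜 (vectorSpan 𝕜 ((A.erase v + B.erase w : Finset V) : Set V)) + 2 :=
  (finrank_vectorSpan_add_le_finrank_insert_insert hv hw ha hb).trans <|
    (finrank_vectorSpan_insert_le_set 𝕜 _ _).trans
      (Nat.add_le_add_right (finrank_vectorSpan_insert_le_set 𝕜 _ _) 1)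

theorem add_notMem_add_of_notMem_affineSpan {a b b' : V} (ha : a ∈ A) (hb : b ∈ B) (hb' : b' ∈ B)
    (h : v + b ∉ affineSpan 𝕜 ((A + B : Finset V) : Set V)) : v + b' ∉ A + B := by
  intro hmem
  have hS : ∀ x ∈ A + B, x ∈ affineSpan 𝕜 ((A + B : Finset V) : Set V) :=
    fun x hx ↦ subset_affineSpan 𝕜 _ (mem_coe.2 hx)
  have := (affineSpan 𝕜 _).sub_add_mem (hS _ hmem) (hS _ (add_mem_add ha hb'))
    (hS _ (add_mem_add ha hb))
  exact h (by convert this using 1; abel)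

theorem singleton_add_subset_sdiff (hv : v ∈ A) (hvw : v + w ∉ A.erase v + B.erase w) {a b : V}
    (ha : a ∈ A.erase v) (hb : b ∈ B.erase w)
    (hvb : v + b ∉ affineSpan 𝕜 ((A.erase v + B.erase w : Finset V) : Set V)) :
    {v} + B ⊆ (A + B) \ (A.erase v + B.erase w) := by
  intro x hx
  obtain ⟨_, hv', b', hb', rfl⟩ := mem_add.1 hx
  rw [mem_singleton.1 hv']
  refine mem_sdiff.2 ⟨add_mem_add hv hb', ?_⟩
  by_cases hb'w : b' = w
  · rwa [hb'w]
  · exact add_notMem_add_of_notMem_affineSpan ha hb (mem_erase.2 ⟨hb'w, hb'⟩) hvb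

theorem add_singleton_subset_sdiff (hw : w ∈ B) (hvw : v + w ∉ A.erase v + B.erase w) {a b : V}
    (ha : a ∈ A.erase v) (hb : b ∈ B.erase w)
    (haw : a + w ∉ affineSpan 𝕜 ((A.erase v + B.erase w : Finset V) : Set V)) :
    A + {w} ⊆ (A + B) \ (A.erase v + B.erase w) := by
  rw [add_comm v, add_comm (A.erase v)] at hvw
  rw [add_comm a, add_comm (A.erase v)] at haw
  rw [add_comm A, add_comm A, add_comm (A.erase v)]
  exact singleton_add_subset_sdiff hw hvw hb ha haw

theorem card_add_card_le_card_union_add_one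
    (h : ∀ a ∈ A.erase v, ∀ b ∈ B.erase w, v + b ≠ a + w) :
    #A + #B ≤ #(({v} + B) ∪ (A + {w})) + 1 := by
  have hinter : #(({v} + B) ∩ (A + {w})) ≤ 1 := by
    refine card_le_one_iff_subset_singleton.2 ⟨v + w, fun x hx ↦ ?_⟩
    obtain ⟨hxB, hxA⟩ := mem_inter.1 hx
    obtain ⟨_, hv', b, hb, rfl⟩ := mem_add.1 hxB
    obtain ⟨a, ha, _, hw', hab⟩ := mem_add.1 hxA
    rw [mem_singleton.1 hv'] at hab ⊢
    rw [mem_singleton.1 hw'] at hab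
    by_cases hbw : b = w
    · rw [hbw, mem_singleton]
    · have hav : a ≠ v := by rintro rfl; exact hbw (add_left_cancel hab).symm
      exact absurd hab.symm (h a (mem_erase.2 ⟨hav, ha⟩) b (mem_erase.2 ⟨hbw, hb⟩))
  have hvB : #({v} + B) = #B := by rw [singleton_add, card_vadd_finset]
  have hAw : #(A + {w}) = #A := by rw [add_singleton, card_vadd_finset]
  have := card_union_add_card_inter ({v} + B) (A + {w})
  omega

theorem card_le_card_sdiff_of_finrank_lt (hv : v ∈ A) (hw : w ∈ B)
    (hvw : v + w ∉ A.erase v + B.erase w) (hBA : #B ≤ #A) {a b : V} (ha : a ∈ A.erase v)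
    (hb : b ∈ B.erase w)
    (hlt : finrank 𝕜 (vectorSpan 𝕜 ((A.erase v + B.erase w : Finset V) : Set V)) <
      finrank 𝕜 (vectorSpan 𝕜 ((A + B : Finset V) : Set V))) :
    #B ≤ #((A + B) \ (A.erase v + B.erase w)) := by
  set S : Set V := ((A.erase v + B.erase w : Finset V) : Set V) with hS
  by_cases hvb : v + b ∈ affineSpan 𝕜 S
  · have haw : a + w ∉ affineSpan 𝕜 S := by
      intro haw
      have := finrank_vectorSpan_add_le_finrank_insert_insert (𝕜 := 𝕜) hv hw ha hb
      rw [← hS, vectorSpan_insert_eq_vectorSpan (by rwa [affineSpan_insert_eq_affineSpan 𝕜 haw]),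
        vectorSpan_insert_eq_vectorSpan haw] at this
      omega
    calc #B ≤ #A := hBA
      _ = #(A + {w}) := by rw [add_singleton, card_vadd_finset]
      _ ≤ _ := card_le_card (add_singleton_subset_sdiff hw hvw ha hb haw)
  · calc #B = #({v} + B) := by rw [singleton_add, card_vadd_finset]
      _ ≤ _ := card_le_card (singleton_add_subset_sdiff hv hvw ha hb hvb)

theorem card_add_card_le_card_sdiff_add_one (hv : v ∈ A) (hw : w ∈ B)
    (hvw : v + w ∉ A.erase v + B.erase w) {a b : V} (ha : a ∈ A.erase v) (hb : b ∈ B.erase w)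
    (h2 : finrank 𝕜 (vectorSpan 𝕜 ((A + B : Finset V) : Set V)) =
      finrank 𝕜 (vectorSpan 𝕜 ((A.erase v + B.erase w : Finset V) : Set V)) + 2) :
    #A + #B ≤ #((A + B) \ (A.erase v + B.erase w)) + 1 := by
  set S : Set V := ((A.erase v + B.erase w : Finset V) : Set V) with hS
  have hvb : v + b ∉ affineSpan 𝕜 S := by
    intro hvb
    have := finrank_vectorSpan_add_le_finrank_insert_insert (𝕜 := 𝕜) hv hw ha hb
    rw [← hS] at this
    have h1 := finrank_vectorSpan_insert_le_set 𝕜 (insert (v + b) S) (a + w)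
    rw [vectorSpan_insert_eq_vectorSpan hvb, Set.insert_comm] at h1
    omega
  have haw : a + w ∉ affineSpan 𝕜 S := by
    intro haw
    have := finrank_vectorSpan_add_le_finrank_insert_insert (𝕜 := 𝕜) hv hw ha hb
    rw [← hS] at this
    have h1 := finrank_vectorSpan_insert_le_set 𝕜 (insert (a + w) S) (v + b)
    rw [vectorSpan_insert_eq_vectorSpan haw] at h1
    omega
  have hne : ∀ a' ∈ A.erase v, ∀ b' ∈ B.erase w, v + b' ≠ a' + w := by
    intro a' ha' b' hb' heq
    have := finrank_vectorSpan_add_le_finrank_insert_insert (𝕜 := 𝕜) hv hw ha' hb'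
    rw [← hS, ← heq, Set.insert_eq_of_mem (Set.mem_insert _ _)] at this
    have := finrank_vectorSpan_insert_le_set 𝕜 S (v + b')
    omega
  exact (card_add_card_le_card_union_add_one hne).trans (Nat.add_le_add_right (card_le_card
    (union_subset (singleton_add_subset_sdiff hv hvw ha hb hvb)
      (add_singleton_subset_sdiff hw hvw ha hb haw))) 1)

end LinearAlgebra

section StrictMaxima

variable {𝕜 V : Type*} [Field 𝕜] [LinearOrder 𝕜] [IsStrictOrderedRing 𝕜]
  [AddCommGroup V] [Module 𝕜 V] [DecidableEq V] (φ : Dual 𝕜 V) {A B : Finset V} {v w : V}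

theorem apply_lt_of_mem_add_of_ne (hφv : ∀ a ∈ A.erase v, φ a < φ v)
    (hφw : ∀ b ∈ B.erase w, φ b < φ w) {p : V} (hp : p ∈ A + B) (hne : p ≠ v + w) :
    φ p < φ (v + w) := by
  obtain ⟨a, ha, b, hb, rfl⟩ := mem_add.1 hp
  rw [map_add, map_add]
  by_cases hav : a = v
  · subst hav
    have hbw : b ≠ w := by rintro rfl; exact hne rfl
    linarith [hφw b (mem_erase.2 ⟨hbw, hb⟩)]
  · have hb' : φ b ≤ φ w := by
      by_cases hbw : b = w
      · rw [hbw]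
      · exact (hφw b (mem_erase.2 ⟨hbw, hb⟩)).le
    linarith [hφv a (mem_erase.2 ⟨hav, ha⟩)]

theorem add_notMem_erase_add_erase (hφv : ∀ a ∈ A.erase v, φ a < φ v)
    (hφw : ∀ b ∈ B.erase w, φ b < φ w) : v + w ∉ A.erase v + B.erase w := by
  intro h
  obtain ⟨a, ha, b, hb, hab⟩ := mem_add.1 h
  have := congrArg φ hab
  rw [map_add, map_add] at this
  linarith [hφv a ha, hφw b hb]

theorem exists_mem_add_apply_eq_of_mem_erase_add_erase (χ : Dual 𝕜 V) (hv : v ∈ A) (hw : w ∈ B)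
    (hφw : ∀ b ∈ B.erase w, φ b < φ w) (hχ : ∀ p ∈ A + B, χ p ≤ χ (v + w)) {q : V}
    (hq : q ∈ A.erase v + B.erase w) (hχq : χ q = χ (v + w)) :
    ∃ p ∈ A + B, p ≠ v + w ∧ χ p = χ (v + w) ∧ φ q < φ p := by
  obtain ⟨a, ha, b, hb, rfl⟩ := mem_add.1 hq
  have haw := hχ _ (add_mem_add (mem_of_mem_erase ha) hw)
  have hvb := hχ _ (add_mem_add hv (mem_of_mem_erase hb))
  simp only [map_add] at hχq haw hvb ⊢
  refine ⟨a + w, add_mem_add (mem_of_mem_erase ha) hw, fun h ↦ ne_of_mem_erase ha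
    (add_right_cancel h), by simp only [map_add]; linarith, ?_⟩
  simp only [map_add]
  linarith [hφw b hb]

theorem apply_le_of_forall_mem_sdiff_apply_eq (hv : v ∈ A) (hw : w ∈ B)
    (hφv : ∀ a ∈ A.erase v, φ a < φ v) (hφw : ∀ b ∈ B.erase w, φ b < φ w) (ψ : Dual 𝕜 V)
    (hψ : ∀ x ∈ (A + B) \ (A.erase v + B.erase w), ψ x = ψ (v + w)) :
    ∀ p ∈ A + B, ψ p ≤ ψ (v + w) := by
  set p₀ := v + w
  set S := (A + B).erase p₀
  have hgap : ∀ x ∈ S, 0 < φ p₀ - φ x := fun x hx ↦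
    sub_pos.2 (apply_lt_of_mem_add_of_ne φ hφv hφw (mem_of_mem_erase hx) (ne_of_mem_erase hx))
  by_contra! ⟨p, hp, hψp⟩
  have hpS : p ∈ S := mem_erase.2 ⟨by rintro rfl; exact hψp.false, hp⟩
  -- the slope at which `p₀` stops being the unique maximiser of `ψ + t • φ` on `A + B`
  set r : V → 𝕜 := fun x ↦ (ψ x - ψ p₀) / (φ p₀ - φ x)
  obtain ⟨p₁, hp₁, hr⟩ := S.exists_max_image r ⟨p, hpS⟩
  set t := r p₁
  have ht : 0 < t := (div_pos (sub_pos.2 hψp) (hgap p hpS)).trans_le (hr p hpS)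
  set χ := ψ + t • φ
  have hχ_iff : ∀ x ∈ S, χ x ≤ χ p₀ ∧ (χ x = χ p₀ ↔ r x = t) := by
    intro x hx
    have hx₀ := (hgap x hx).ne'
    simp only [χ, r, LinearMap.add_apply, LinearMap.smul_apply, smul_eq_mul, div_eq_iff hx₀]
    refine ⟨?_, by constructor <;> intro h <;> linarith⟩
    have := (div_le_iff₀ (hgap x hx)).1 (hr x hx)
    linarith
  have hχ : ∀ x ∈ A + B, χ x ≤ χ p₀ := fun x hx ↦ by
    by_cases hx₀ : x = p₀
    · rw [hx₀]
    · exact (hχ_iff x (mem_erase.2 ⟨hx₀, hx⟩)).1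
  set F := S.filter fun x ↦ χ x = χ p₀
  obtain ⟨q, hqF, hq⟩ := F.exists_max_image φ ⟨p₁, mem_filter.2 ⟨hp₁, (hχ_iff p₁ hp₁).2.2 rfl⟩⟩
  obtain ⟨hqS, hχq⟩ := mem_filter.1 hqF
  have hqX : q ∈ (A + B) \ (A.erase v + B.erase w) := by
    refine mem_sdiff.2 ⟨mem_of_mem_erase hqS, fun hq' ↦ ?_⟩
    obtain ⟨p', hp', hne, hχp', hlt⟩ :=
      exists_mem_add_apply_eq_of_mem_erase_add_erase φ χ hv hw hφw hχ hq' hχq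
    exact (hq p' (mem_filter.2 ⟨mem_erase.2 ⟨hne, hp'⟩, hχp'⟩)).not_gt hlt
  have hrq : r q = t := (hχ_iff q hqS).2.1 hχq
  simp only [r, hψ q hqX, sub_self, zero_div] at hrq
  exact ht.ne hrq

theorem vectorSpan_add_le_vectorSpan_sdiff (hv : v ∈ A) (hw : w ∈ B)
    (hφv : ∀ a ∈ A.erase v, φ a < φ v) (hφw : ∀ b ∈ B.erase w, φ b < φ w) :
    vectorSpan 𝕜 ((A + B : Finset V) : Set V) ≤
      vectorSpan 𝕜 (((A + B) \ (A.erase v + B.erase w) : Finset V) : Set V) := by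
  set X := (A + B) \ (A.erase v + B.erase w)
  have hX : v + w ∈ X := mem_sdiff.2 ⟨add_mem_add hv hw, add_notMem_erase_add_erase φ hφv hφw⟩
  rw [vectorSpan_eq_span_vsub_set_right 𝕜 (mem_coe.2 (add_mem_add hv hw)), Submodule.span_le]
  rintro _ ⟨p, hp, rfl⟩
  by_contra hpX
  simp only [SetLike.mem_coe, vsub_eq_sub] at hpX
  obtain ⟨f, hfp, hfX⟩ := Submodule.exists_dual_map_eq_bot_of_notMem hpX inferInstance
  have hf : ∀ x ∈ X, f x = f (v + w) := fun x hx ↦ by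
    have := hfX ▸ Submodule.mem_map_of_mem (f := f)
      (vsub_mem_vectorSpan 𝕜 (mem_coe.2 hx) (mem_coe.2 hX))
    rwa [Submodule.mem_bot, vsub_eq_sub, map_sub, sub_eq_zero] at this
  have h₁ := apply_le_of_forall_mem_sdiff_apply_eq φ hv hw hφv hφw f hf p hp
  have h₂ := apply_le_of_forall_mem_sdiff_apply_eq φ hv hw hφv hφw (-f)
    (fun x hx ↦ by simp [hf x hx]) p hp
  simp only [LinearMap.neg_apply, neg_le_neg_iff] at h₂
  exact hfp (by rw [map_sub]; linarith)

theorem finrank_vectorSpan_add_add_one_le_card_sdiff (hv : v ∈ A) (hw : w ∈ B)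
    (hφv : ∀ a ∈ A.erase v, φ a < φ v) (hφw : ∀ b ∈ B.erase w, φ b < φ w) :
    finrank 𝕜 (vectorSpan 𝕜 ((A + B : Finset V) : Set V)) + 1 ≤
      #((A + B) \ (A.erase v + B.erase w)) :=
  (Nat.add_le_add_right (Submodule.finrank_mono
    (vectorSpan_add_le_vectorSpan_sdiff φ hv hw hφv hφw)) 1).trans
    (finrank_vectorSpan_add_one_le_card
      ⟨v + w, mem_sdiff.2 ⟨add_mem_add hv hw, add_notMem_erase_add_erase φ hφv hφw⟩⟩)

theorem finrank_vectorSpan_add_trichotomy (hv : v ∈ A) (hw : w ∈ B)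
    (hφv : ∀ a ∈ A.erase v, φ a < φ v) (hφw : ∀ b ∈ B.erase w, φ b < φ w) (hBA : #B ≤ #A)
    (hA : (A.erase v).Nonempty) (hB : (B.erase w).Nonempty) {d D : ℕ}
    (hd : finrank 𝕜 (vectorSpan 𝕜 ((A + B : Finset V) : Set V)) = d)
    (hD : finrank 𝕜 (vectorSpan 𝕜 ((A.erase v + B.erase w : Finset V) : Set V)) = D) :
    (d = D ∧ d + 1 ≤ #((A + B) \ (A.erase v + B.erase w))) ∨
      (d = D + 1 ∧ #B ≤ #((A + B) \ (A.erase v + B.erase w))) ∨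
      (d = D + 2 ∧ #A + #B ≤ #((A + B) \ (A.erase v + B.erase w)) + 1) := by
  obtain ⟨a, ha⟩ := hA
  obtain ⟨b, hb⟩ := hB
  have hvw := add_notMem_erase_add_erase φ hφv hφw
  have hDd : D ≤ d := hD ▸ hd ▸ Submodule.finrank_mono (vectorSpan_mono 𝕜 (coe_subset.2
    (add_subset_add (erase_subset v A) (erase_subset w B))))
  have hdD := finrank_vectorSpan_add_le_add_two (𝕜 := 𝕜) hv hw ha hb
  rw [hd, hD] at hdD
  obtain rfl | rfl | rfl : d = D ∨ d = D + 1 ∨ d = D + 2 := by omega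
  · exact .inl ⟨rfl, hd ▸ finrank_vectorSpan_add_add_one_le_card_sdiff φ hv hw hφv hφw⟩
  · exact .inr <| .inl
      ⟨rfl, card_le_card_sdiff_of_finrank_lt (𝕜 := 𝕜) hv hw hvw hBA ha hb (by omega)⟩
  · exact .inr <| .inr
      ⟨rfl, card_add_card_le_card_sdiff_add_one (𝕜 := 𝕜) hv hw hvw ha hb (by omega)⟩

theorem ruzsa_card_add_ge (A B : Finset V) (hB : B.Nonempty) (hBA : #B ≤ #A) {d : ℕ}
    (hd : finrank 𝕜 (vectorSpan 𝕜 ((A + B : Finset V) : Set V)) = d) :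
    2 * #A + 2 * d * #B ≤ 2 * #(A + B) + d * (d + 1) := by
  obtain ⟨m, hm⟩ : ∃ m, #B = m + 1 := ⟨#B - 1, by have := hB.card_pos; omega⟩
  induction m generalizing A B d with
  | zero =>
    obtain ⟨b, rfl⟩ := card_eq_one.1 hm
    rw [add_singleton, card_vadd_finset, card_singleton]
    rcases Nat.eq_zero_or_pos d with rfl | hd₀ <;> nlinarith
  | succ m ih =>
    obtain ⟨φ, hφ⟩ := Module.exists_dual_injOn (𝕜 := 𝕜) (A ∪ B).finite_toSet
    have hA : A.Nonempty := card_pos.1 (by omega)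
    obtain ⟨v, hv, hφv⟩ := hA.exists_forall_mem_erase_lt_of_injOn
      (hφ.mono (coe_subset.2 subset_union_left))
    obtain ⟨w, hw, hφw⟩ := hB.exists_forall_mem_erase_lt_of_injOn
      (hφ.mono (coe_subset.2 subset_union_right))
    have hA' : #(A.erase v) + 1 = #A := card_erase_add_one hv
    have hB' : #(B.erase w) + 1 = #B := card_erase_add_one hw
    have hsplit := card_sdiff_add_card_eq_card
      (add_subset_add (erase_subset v A) (erase_subset w B))
    have hIH := ih (A.erase v) (B.erase w) (card_pos.1 (by omega)) (by omega) rfl (by omega)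
    rcases finrank_vectorSpan_add_trichotomy φ hv hw hφv hφw hBA (card_pos.1 (by omega))
      (card_pos.1 (by omega)) hd rfl with ⟨rfl, hX⟩ | ⟨rfl, hX⟩ | ⟨rfl, hX⟩ <;> nlinarith

end StrictMaxima

theorem stmt9_general (d : ℕ) (A B : Finset (Fin d → ℝ)) (hB : B.Nonempty)
    (hcard : B.card ≤ A.card)
    (hdim : affineSpan ℝ ((A + B : Finset (Fin d → ℝ)) : Set (Fin d → ℝ)) = ⊤) :
    (A.card : ℝ) + d * B.card - d * (d + 1) / 2 ≤ ((A + B).card : ℝ) := by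
  have hd : finrank ℝ (vectorSpan ℝ ((A + B : Finset (Fin d → ℝ)) : Set (Fin d → ℝ))) = d := by
    rw [← direction_affineSpan, hdim, AffineSubspace.direction_top, finrank_top, finrank_fin_fun]
  have h : 2 * #A + 2 * d * #B ≤ 2 * #(A + B) + d * (d + 1) := ruzsa_card_add_ge A B hB hcard hd
  have h' : (2 * #A + 2 * d * #B : ℝ) ≤ 2 * #(A + B) + d * (d + 1) := by exact_mod_cast h
  linarith

/-- Ruzsa's `d`-dimensional sumset bound: if `A, B ⊆ ℝ^d` are finite nonempty
with `|A| ≥ |B|` and `A + B` has affine dimension `d` (its affine span is all of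
`ℝ^d`), then `|A + B| ≥ |A| + d|B| − d(d+1)/2`. -/
theorem stmt9 (d : ℕ) (A B : Finset (Fin d → ℝ)) (hA : A.Nonempty) (hB : B.Nonempty)
    (hcard : B.card ≤ A.card)
    (hdim : affineSpan ℝ ((A + B : Finset (Fin d → ℝ)) : Set (Fin d → ℝ)) = ⊤) :
    (A.card : ℝ) + d * B.card - d * (d + 1) / 2 ≤ ((A + B).card : ℝ) :=
  stmt9_general d A B hB hcard hdim
end

section
/- Let A' ⊆ ℝ^d be a finite nonempty set contained in r−1 parallel lines l₁,…,l_{r−1} (each containing at least one point of A'), and let p ⊆ ℝ^d be a finite set contained in a line l_r parallel to these, with |p| > |A'| and r ≥ d + 1 ≥ 2. Let q, s be nonzero integers. If the 2(r−1) lines s·l_i + q·l_r and q·l_i + s·l_r (1 ≤ i ≤ r−1) are pairwise distinct, then |s·A' + q·p| + |q·A' + s·p| ≥ 2|A'| + (2d−2)|p| − 2d. -/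
/-!
Each line `lᵢ` contains a point `xᵢ ∈ A'`, and the translate `s·xᵢ + q·p` is a copy of `p`
inside `s·A' + q·p` lying on the line `s·lᵢ + q·l_r`. Since these `r − 1` lines are distinct,
the copies are disjoint, so `|s·A' + q·p| ≥ (r − 1)|p| ≥ d|p|`, and likewise for `q·A' + s·p`.
Finally `2d|p| ≥ 2|A'| + (2d − 2)|p| − 2d` because `|p| > |A'|`.
-/

open Pointwise Finset

theorem Finset.card_mul_card_le_card_add {G ι : Type*} [AddGroup G] [DecidableEq G]
    {A B : Finset G} (s : Finset ι) (f : ι → G) (hf : ∀ i ∈ s, f i ∈ A)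
    (hdisj : (s : Set ι).PairwiseDisjoint fun i => f i +ᵥ B) :
    #s * #B ≤ #(A + B) :=
  calc #s * #B = ∑ i ∈ s, #(f i +ᵥ B) := by simp [mul_comm]
    _ = #(s.biUnion fun i => f i +ᵥ B) := (card_biUnion hdisj).symm
    _ ≤ #(A + B) :=
      card_le_card <| biUnion_subset.2 fun i hi => vadd_finset_subset_add (hf i hi)

section Lines

variable (K : Type*) {E : Type*} [Field K] [AddCommGroup E] [Module K E]

def line (c v : E) : Set E := {x | ∃ t : K, x = c + t • v}

variable {K} {c c' v x y : E}

theorem add_mem_line_add (hx : x ∈ line K c v) (hy : y ∈ line K c' v) :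
    x + y ∈ line K (c + c') v := by
  obtain ⟨t, rfl⟩ := hx
  obtain ⟨u, rfl⟩ := hy
  exact ⟨t + u, by module⟩

theorem smul_mem_line_smul (a : K) (hx : x ∈ line K c v) : a • x ∈ line K (a • c) v := by
  obtain ⟨t, rfl⟩ := hx
  exact ⟨a * t, by module⟩

theorem line_eq_of_mem (hx : x ∈ line K c v) : line K c v = line K x v := by
  obtain ⟨t, rfl⟩ := hx
  ext y
  constructor
  · rintro ⟨u, rfl⟩
    exact ⟨u - t, by module⟩
  · rintro ⟨u, rfl⟩
    exact ⟨t + u, by module⟩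

variable [DecidableEq E]

theorem card_mul_card_le_card_add_of_injective_line {ι : Type*} [Fintype ι] {A B : Finset E}
    (a : ι → E) (b v : E) (hA : ∀ i, ∃ x ∈ A, x ∈ line K (a i) v)
    (hB : ∀ y ∈ B, y ∈ line K b v) (hl : Function.Injective fun i => line K (a i + b) v) :
    Fintype.card ι * #B ≤ #(A + B) := by
  choose x hxA hx using hA
  refine card_mul_card_le_card_add univ x (fun i _ => hxA i) fun i _ j _ hij => ?_
  refine disjoint_left.2 fun z hzi hzj => hij (hl ?_)
  obtain ⟨y, hy, rfl⟩ := mem_vadd_finset.1 hzi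
  obtain ⟨y', hy', hyy'⟩ := mem_vadd_finset.1 hzj
  have hi := add_mem_line_add (hx i) (hB y hy)
  have hj := add_mem_line_add (hx j) (hB y' hy')
  rw [vadd_eq_add, vadd_eq_add] at hyy'
  rw [hyy'] at hj
  exact (line_eq_of_mem hi).trans (line_eq_of_mem hj).symm

theorem card_mul_card_le_card_smul_add_smul {ι : Type*} [Fintype ι] {A B : Finset E}
    (a : ι → E) (b v : E) (hA : ∀ i, ∃ x ∈ A, x ∈ line K (a i) v)
    (hB : ∀ y ∈ B, y ∈ line K b v) (c' c : K) (hc : c ≠ 0)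
    (hl : Function.Injective fun i => line K (c' • a i + c • b) v) :
    Fintype.card ι * #B ≤ #(c' • A + c • B) := by
  rw [← card_smul_finset₀ hc B]
  refine card_mul_card_le_card_add_of_injective_line _ _ v (fun i => ?_) (fun y hy => ?_) hl
  · obtain ⟨x, hx, hxl⟩ := hA i
    exact ⟨c' • x, smul_mem_smul_finset hx, smul_mem_line_smul c' hxl⟩
  · obtain ⟨y, hyB, rfl⟩ := mem_smul_finset.1 hy
    exact smul_mem_line_smul c (hB y hyB)

end Lines

theorem stmt10_general (d r : ℕ) (hr : d + 1 ≤ r)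
    (v : Fin d → ℝ)
    (a : Fin (r - 1) → (Fin d → ℝ)) (b : Fin d → ℝ)
    (A' p : Finset (Fin d → ℝ))
    (hmeet : ∀ i : Fin (r - 1), ∃ x ∈ A', ∃ t : ℝ, x = a i + t • v)
    (hp : ∀ x ∈ p, ∃ t : ℝ, x = b + t • v)
    (hsize : A'.card < p.card)
    (q s : ℤ) (hq : q ≠ 0) (hs : s ≠ 0)
    (hlines : Function.Injective fun j : Fin (r - 1) ⊕ Fin (r - 1) =>
      Sum.elim
        (fun i => {x : Fin d → ℝ | ∃ t : ℝ, x = (s : ℝ) • a i + (q : ℝ) • b + t • v})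
        (fun i => {x : Fin d → ℝ | ∃ t : ℝ, x = (q : ℝ) • a i + (s : ℝ) • b + t • v}) j) :
    2 * (A'.card : ℝ) + (2 * d - 2) * p.card - 2 * d ≤
      (((A'.image fun x => (s : ℝ) • x) + (p.image fun x => (q : ℝ) • x)).card : ℝ) +
      (((A'.image fun x => (q : ℝ) • x) + (p.image fun x => (s : ℝ) • x)).card : ℝ) := by
  have h₁ := card_mul_card_le_card_smul_add_smul a b v hmeet hp (s : ℝ) (q : ℝ)
    (Int.cast_ne_zero.2 hq) (hlines.comp Sum.inl_injective)
  have h₂ := card_mul_card_le_card_smul_add_smul a b v hmeet hp (q : ℝ) (s : ℝ)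
    (Int.cast_ne_zero.2 hs) (hlines.comp Sum.inr_injective)
  rw [Fintype.card_fin] at h₁ h₂
  have hdp : d * #p ≤ (r - 1) * #p := Nat.mul_le_mul_right _ (by omega)
  have hsum : (d * #p + d * #p : ℝ) ≤
      #((s : ℝ) • A' + (q : ℝ) • p) + #((q : ℝ) • A' + (s : ℝ) • p) := by
    exact_mod_cast Nat.add_le_add (hdp.trans h₁) (hdp.trans h₂)
  have hAp : (#A' : ℝ) + 1 ≤ #p := by exact_mod_cast hsize
  show _ ≤ (#((s : ℝ) • A' + (q : ℝ) • p) : ℝ) + #((q : ℝ) • A' + (s : ℝ) • p)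
  linarith [(d.cast_nonneg : (0 : ℝ) ≤ d)]

/-- Key claim (cl), second case of Proposition 4.1: let `A' ⊆ ℝ^d` be finite
nonempty, covered by `r − 1` parallel lines (direction `v ≠ 0`, base points
`a i`), each containing a point of `A'`, and let `p` be a finite set contained
in a parallel line through `b`, with `|p| > |A'|` and `r ≥ d + 1 ≥ 2`. Let
`q, s` be nonzero integers. If the `2(r−1)` lines `s·lᵢ + q·l_r` and
`q·lᵢ + s·l_r` (which are the lines with direction `v` through
`s•(a i) + q•b` resp. `q•(a i) + s•b`) are pairwise distinct, then
`|s·A' + q·p| + |q·A' + s·p| ≥ 2|A'| + (2d−2)|p| − 2d`. -/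
theorem stmt10 (d r : ℕ) (hd : 1 ≤ d) (hr : d + 1 ≤ r)
    (v : Fin d → ℝ) (hv : v ≠ 0)
    (a : Fin (r - 1) → (Fin d → ℝ)) (b : Fin d → ℝ)
    (A' p : Finset (Fin d → ℝ)) (hA' : A'.Nonempty)
    (hcov : ∀ x ∈ A', ∃ (i : Fin (r - 1)) (t : ℝ), x = a i + t • v)
    (hmeet : ∀ i : Fin (r - 1), ∃ x ∈ A', ∃ t : ℝ, x = a i + t • v)
    (hp : ∀ x ∈ p, ∃ t : ℝ, x = b + t • v)
    (hsize : A'.card < p.card)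
    (q s : ℤ) (hq : q ≠ 0) (hs : s ≠ 0)
    (hlines : Function.Injective fun j : Fin (r - 1) ⊕ Fin (r - 1) =>
      Sum.elim
        (fun i => {x : Fin d → ℝ | ∃ t : ℝ, x = (s : ℝ) • a i + (q : ℝ) • b + t • v})
        (fun i => {x : Fin d → ℝ | ∃ t : ℝ, x = (q : ℝ) • a i + (s : ℝ) • b + t • v}) j) :
    2 * (A'.card : ℝ) + (2 * d - 2) * p.card - 2 * d ≤
      (((A'.image fun x => (s : ℝ) • x) + (p.image fun x => (q : ℝ) • x)).card : ℝ) +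
      (((A'.image fun x => (q : ℝ) • x) + (p.image fun x => (s : ℝ) • x)).card : ℝ) :=
  stmt10_general d r hr v a b A' p hmeet hp hsize q s hq hs hlines
end

section
/- Let A be a finite subset of ℝ² covered by r₁ parallel lines in direction u, each containing at least one point of A, and let L ∈ GL(2,ℝ) have no real eigenvalues. If L(A) is covered by r₂ lines in direction u (each meeting L(A)), then r₁·r₂ ≥ |A|. -/
open Pointwise

/-!
Project along `u`, i.e. pass to the quotient `V ⧸ span {u}`. Two points `x ≠ y` with the same
images both of `x` and of `L x` would give `L (x - y) ∥ x - y ∥ u`, so `u` would be an eigenvector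
of `L`. Hence `x ↦ (x mod u, L x mod u)` is injective on `A`, and its two coordinates take at most
`r₁` and `r₂` values.
-/

section

variable {K V : Type*} [Field K] [AddCommGroup V] [Module K V]

theorem eq_of_sub_mem_span_of_map_sub_mem_span {L : V →ₗ[K] V} {u : V}
    (hu : ∀ c : K, L u ≠ c • u) {x y : V} (hxy : x - y ∈ K ∙ u) (hLxy : L x - L y ∈ K ∙ u) :
    x = y := by
  obtain ⟨s, hs⟩ := Submodule.mem_span_singleton.mp hxy
  obtain ⟨σ, hσ⟩ := Submodule.mem_span_singleton.mp hLxy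
  rw [← map_sub, ← hs, map_smul] at hσ
  by_cases hs0 : s = 0
  · rwa [hs0, zero_smul, eq_comm, sub_eq_zero] at hs
  · refine absurd ?_ (hu (σ / s))
    rw [div_eq_inv_mul, mul_smul, hσ, inv_smul_smul₀ hs0]

open scoped Classical in
theorem card_image_mkQ_le {ι : Type*} [Fintype ι] (p : Submodule K V) (A : Finset V)
    (a : ι → V) (hA : ∀ x ∈ A, ∃ i, x - a i ∈ p) :
    (A.image p.mkQ).card ≤ Fintype.card ι := by
  calc (A.image p.mkQ).card ≤ (Finset.univ.image (p.mkQ ∘ a)).card := by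
        refine Finset.card_le_card fun q hq => ?_
        obtain ⟨x, hx, rfl⟩ := Finset.mem_image.mp hq
        obtain ⟨i, hi⟩ := hA x hx
        exact Finset.mem_image.mpr ⟨i, Finset.mem_univ i, (p.mkQ_apply _).trans
          ((Submodule.Quotient.eq p).mpr hi).symm⟩
    _ ≤ Fintype.card ι := Finset.card_image_le

theorem card_le_mul_of_forall_sub_mem_span {ι κ : Type*} [Fintype ι] [Fintype κ]
    {L : V →ₗ[K] V} {u : V} (hu : ∀ c : K, L u ≠ c • u) (A : Finset V) (a : ι → V)
    (b : κ → V) (hA : ∀ x ∈ A, ∃ i, x - a i ∈ K ∙ u)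
    (hLA : ∀ x ∈ A, ∃ j, L x - b j ∈ K ∙ u) :
    A.card ≤ Fintype.card ι * Fintype.card κ := by
  classical
  set π := (K ∙ u).mkQ
  have hinj : Set.InjOn (fun x => (π x, π (L x))) A := fun x _ y _ hxy =>
    eq_of_sub_mem_span_of_map_sub_mem_span hu
      ((Submodule.Quotient.eq _).mp (congrArg Prod.fst hxy))
      ((Submodule.Quotient.eq _).mp (congrArg Prod.snd hxy))
  calc A.card ≤ (A.image π ×ˢ (A.image L).image π).card :=
        Finset.card_le_card_of_injOn _ (fun x hx => Finset.mem_product.mpr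
          ⟨Finset.mem_image_of_mem _ hx,
            Finset.mem_image_of_mem _ (Finset.mem_image_of_mem _ hx)⟩) hinj
    _ = (A.image π).card * ((A.image L).image π).card := Finset.card_product _ _
    _ ≤ Fintype.card ι * Fintype.card κ := by
        gcongr
        · exact card_image_mkQ_le (K ∙ u) A a hA
        · refine card_image_mkQ_le (K ∙ u) _ b fun y hy => ?_
          obtain ⟨x, hx, rfl⟩ := Finset.mem_image.mp hy
          exact hLA x hx

end

theorem stmt12_general (L : (Fin 2 → ℝ) →ₗ[ℝ] (Fin 2 → ℝ))
    (heig : ∀ (c : ℝ) (x : Fin 2 → ℝ), x ≠ 0 → L x ≠ c • x)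
    (A : Finset (Fin 2 → ℝ)) (u : Fin 2 → ℝ) (hu : u ≠ 0)
    (r₁ r₂ : ℕ) (a : Fin r₁ → (Fin 2 → ℝ)) (b : Fin r₂ → (Fin 2 → ℝ))
    (hcovA : ∀ x ∈ A, ∃ (i : Fin r₁) (t : ℝ), x = a i + t • u)
    (hcovLA : ∀ y ∈ A.image L, ∃ (j : Fin r₂) (t : ℝ), y = b j + t • u) :
    A.card ≤ r₁ * r₂ := by
  have mem_span_of_eq {x c : Fin 2 → ℝ} {t : ℝ} (h : x = c + t • u) : x - c ∈ ℝ ∙ u :=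
    Submodule.mem_span_singleton.mpr ⟨t, by rw [h, add_sub_cancel_left]⟩
  simpa using card_le_mul_of_forall_sub_mem_span (fun c => heig c u hu) A a b
    (fun x hx => (hcovA x hx).imp fun _ ⟨_, h⟩ => mem_span_of_eq h)
    (fun x hx => (hcovLA (L x) (Finset.mem_image_of_mem L hx)).imp fun _ ⟨_, h⟩ =>
      mem_span_of_eq h)

/-- Counting step in the proof of Theorem 5.2: let `A ⊆ ℝ²` be finite, covered
by `r₁` parallel lines in direction `u` (base points `a i`), each containing a
point of `A`, and let `L ∈ GL(2, ℝ)` have no real eigenvalues. If `L(A)` is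
covered by `r₂` lines in direction `u` (base points `b j`), each meeting
`L(A)`, then `r₁ · r₂ ≥ |A|`. -/
theorem stmt12 (L : (Fin 2 → ℝ) →ₗ[ℝ] (Fin 2 → ℝ)) (hL : Function.Bijective L)
    (heig : ∀ (c : ℝ) (x : Fin 2 → ℝ), x ≠ 0 → L x ≠ c • x)
    (A : Finset (Fin 2 → ℝ)) (u : Fin 2 → ℝ) (hu : u ≠ 0)
    (r₁ r₂ : ℕ) (a : Fin r₁ → (Fin 2 → ℝ)) (b : Fin r₂ → (Fin 2 → ℝ))
    (hcovA : ∀ x ∈ A, ∃ (i : Fin r₁) (t : ℝ), x = a i + t • u)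
    (hmeetA : ∀ i : Fin r₁, ∃ x ∈ A, ∃ t : ℝ, x = a i + t • u)
    (hcovLA : ∀ y ∈ A.image L, ∃ (j : Fin r₂) (t : ℝ), y = b j + t • u)
    (hmeetLA : ∀ j : Fin r₂, ∃ y ∈ A.image L, ∃ t : ℝ, y = b j + t • u) :
    A.card ≤ r₁ * r₂ :=
  stmt12_general L heig A u hu r₁ r₂ a b hcovA hcovLA
end

section
/- Let G be an abelian group and U, V finite nonempty subsets of G. Then |U + V| ≤ |U − V|³ / (|U|·|V|). -/
open Pointwise Finset

theorem card_add_mul_card_mul_card_le_card_sub_pow_three {G : Type*} [AddCommGroup G]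
    [DecidableEq G] (U V : Finset G) : #(U + V) * #U * #V ≤ #(U - V) ^ 3 :=
  calc #(U + V) * #U * #V
      ≤ #(U - U) * #(U - V) * #V :=
        Nat.mul_le_mul_right _ (ruzsa_triangle_inequality_add_sub_sub U U V)
    _ = #(U - U) * #V * #(U - V) := by ring
    _ ≤ #(U - V) * #(U - V) * #(U - V) :=
        Nat.mul_le_mul_right _ (ruzsa_triangle_inequality_sub_sub_sub U V U)
    _ = #(U - V) ^ 3 := by ring

/-- For finite nonempty subsets `U, V` of an abelian group `G`,
`|U + V| ≤ |U − V|³ / (|U| · |V|)`. -/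
theorem stmt17 {G : Type*} [AddCommGroup G] [DecidableEq G]
    (U V : Finset G) (hU : U.Nonempty) (hV : V.Nonempty) :
    ((U + V).card : ℝ) ≤ ((U - V).card : ℝ) ^ 3 / (U.card * V.card) := by
  rw [le_div_iff₀ (by positivity), ← mul_assoc]
  exact_mod_cast card_add_mul_card_mul_card_le_card_sub_pow_three U V
end

section
/- Let A ⊆ ℝ^d be finite with |A+A| ≤ c⁶|A| for some c > 0 and |A| = n sufficiently large. Suppose A is covered by parallel lines l₁,…,l_k with p_i = A ∩ l_i satisfying |p₁| ≥ … ≥ |p_k| and |p₁| ≥ C₁⁻¹ n^{1/s}. Let r be maximal with |p_r| ≥ |p₁|^{1/2} and set B = A \ (l₁ ∪ … ∪ l_r). Then |B| < |p₁|^{−1/2}|A + A| ≤ C₁^{1/2} c⁶ n^{1 − 1/(2s)}. -/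
/-!
Lines with direction `v` are the fibres of the quotient map `π : ℝ^d → ℝ^d ⧸ ℝ ∙ v`, so
`p₁ + p_j` lies in the fibre over `π a₁ + π a_j`. Hence the sumsets `p₁ + p_j`, for the `m`
nonempty pieces `p_j` with `j ≥ r`, are pairwise disjoint subsets of `A + A` of size at least
`|p₁|`, giving `m |p₁| ≤ |A + A|`. Each of these pieces has fewer than `|p₁|^{1/2}` points,
so `|B| < m |p₁|^{1/2} ≤ |p₁|^{-1/2} |A + A|`. The last bound follows from `|A + A| ≤ c⁶ n`
and `|p₁| ≥ C₁⁻¹ n^{1/s}`.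
-/

open Pointwise Finset

section Fibers

variable {G H F ι : Type*} [Add G] [DecidableEq G] [Add H]
  [IsLeftCancelAdd H] [FunLike F G H] [AddHomClass F G H]

theorem Finset.disjoint_add_of_map_eq (f : F) {P Q Q' : Finset G} {b c c' : H}
    (hP : ∀ x ∈ P, f x = b) (hQ : ∀ x ∈ Q, f x = c) (hQ' : ∀ x ∈ Q', f x = c')
    (hcc' : c ≠ c') :
    Disjoint (P + Q) (P + Q') := by
  refine disjoint_left.2 fun z hz hz' => hcc' ?_
  obtain ⟨x, hx, y, hy, rfl⟩ := mem_add.1 hz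
  obtain ⟨x', hx', y', hy', h⟩ := mem_add.1 hz'
  have := congrArg f h
  rw [map_add, map_add, hP x hx, hP x' hx', hQ y hy, hQ' y' hy'] at this
  exact (add_left_cancel this).symm

theorem Finset.card_mul_card_le_card_add_s18 [IsRightCancelAdd G] (f : F) {A P : Finset G}
    {s : Finset ι} {Q : ι → Finset G} {b : H} {c : ι → H} (hPA : P ⊆ A)
    (hQA : ∀ i ∈ s, Q i ⊆ A)
    (hP : ∀ x ∈ P, f x = b) (hQ : ∀ i ∈ s, ∀ x ∈ Q i, f x = c i) (hc : Set.InjOn c s)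
    (hQne : ∀ i ∈ s, (Q i).Nonempty) :
    #s * #P ≤ #(A + A) :=
  calc #s * #P = ∑ _i ∈ s, #P := by rw [sum_const, smul_eq_mul]
    _ ≤ ∑ i ∈ s, #(P + Q i) := sum_le_sum fun i hi => card_le_card_add_right (hQne i hi)
    _ = #(s.biUnion fun i => P + Q i) :=
      (card_biUnion fun i hi j hj hij =>
        disjoint_add_of_map_eq f hP (hQ i hi) (hQ j hj) (hc.ne hi hj hij)).symm
    _ ≤ #(A + A) := card_le_card <| biUnion_subset.2 fun i hi => add_subset_add hPA (hQA i hi)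

end Fibers

theorem Finset.card_mul_lt_of_subset_biUnion {α ι : Type*} [DecidableEq α] {B : Finset α}
    {s : Finset ι} {Q : ι → Finset α} {m X : ℝ} (hB : B ⊆ s.biUnion Q)
    (hQ : ∀ i ∈ s, (#(Q i) : ℝ) < m) (hX : 0 < X) (hsX : #s * (m * m) ≤ X) :
    (#B : ℝ) * m < X := by
  rcases s.eq_empty_or_nonempty with rfl | ⟨i, hi⟩
  · rw [biUnion_empty, subset_empty] at hB
    simpa [hB] using hX
  have hm : 0 < m := (Nat.cast_nonneg _).trans_lt (hQ i hi)
  calc (#B : ℝ) * m ≤ (∑ i ∈ s, (#(Q i) : ℝ)) * m := by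
        gcongr; exact_mod_cast (card_le_card hB).trans card_biUnion_le
    _ < (∑ _i ∈ s, m) * m := mul_lt_mul_of_pos_right (sum_lt_sum_of_nonempty ⟨i, hi⟩ hQ) hm
    _ = #s * (m * m) := by rw [sum_const, nsmul_eq_mul, mul_assoc]
    _ ≤ X := hsX

theorem Submodule.mkQ_span_singleton_eq_iff {R M : Type*} [Ring R] [AddCommGroup M] [Module R M]
    {v x a : M} : (span R {v}).mkQ x = (span R {v}).mkQ a ↔ ∃ t : R, x = a + t • v := by
  simp only [mkQ_apply, Quotient.eq, mem_span_singleton, eq_sub_iff_add_eq, eq_comm (a := x),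
    add_comm (a := a)]

theorem Real.rpow_neg_half_mul_le {C K n P X s : ℝ} (hC : 0 < C) (hn : 0 < n)
    (hP : C⁻¹ * n ^ (1 / s) ≤ P) (hX : X ≤ K * n) (hX0 : 0 ≤ X) :
    P ^ (-(1 : ℝ) / 2) * X ≤ C ^ (1 / 2 : ℝ) * K * n ^ (1 - 1 / (2 * s)) := by
  have hlow : 0 < C⁻¹ * n ^ (1 / s) := by positivity
  have hpow :
      (C⁻¹ * n ^ (1 / s)) ^ (-(1 : ℝ) / 2) = C ^ (1 / 2 : ℝ) * n ^ (-(1 / (2 * s))) := by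
    rw [mul_rpow (by positivity) (by positivity), inv_rpow hC.le, ← rpow_neg hC.le,
      ← rpow_mul hn.le]
    congr 2 <;> ring
  calc P ^ (-(1 : ℝ) / 2) * X ≤ (C⁻¹ * n ^ (1 / s)) ^ (-(1 : ℝ) / 2) * (K * n) :=
        mul_le_mul (rpow_le_rpow_of_nonpos hlow hP (by norm_num)) hX hX0 (by positivity)
    _ = C ^ (1 / 2 : ℝ) * K * (n ^ (-(1 / (2 * s))) * n ^ (1 : ℝ)) := by
        rw [hpow, rpow_one]; ring
    _ = C ^ (1 / 2 : ℝ) * K * n ^ (1 - 1 / (2 * s)) := by rw [← rpow_add hn]; ring_nf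

theorem stmt18_general (c C₁ : ℝ) (hC₁ : 0 < C₁) (s : ℕ) :
    ∃ N : ℕ, ∀ (d k r : ℕ) (hk : 0 < k),
      ∀ (A B : Finset (Fin d → ℝ)) (v : Fin d → ℝ), v ≠ 0 →
      ∀ (a : Fin k → (Fin d → ℝ)) (p : Fin k → Finset (Fin d → ℝ)),
      N ≤ A.card →
      ((A + A).card : ℝ) ≤ c ^ 6 * A.card →
      (Function.Injective fun i : Fin k =>
        {x : Fin d → ℝ | ∃ t : ℝ, x = a i + t • v}) →
      (∀ x ∈ A, ∃ (i : Fin k) (t : ℝ), x = a i + t • v) →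
      (∀ (i : Fin k) (x : Fin d → ℝ),
        x ∈ p i ↔ x ∈ A ∧ ∃ t : ℝ, x = a i + t • v) →
      (∀ i j : Fin k, i ≤ j → (p j).card ≤ (p i).card) →
      C₁⁻¹ * (A.card : ℝ) ^ ((1 : ℝ) / s) ≤ ((p ⟨0, hk⟩).card : ℝ) →
      r ≤ k →
      (∀ i : Fin k, (i : ℕ) < r →
        ((p ⟨0, hk⟩).card : ℝ) ^ ((1 : ℝ) / 2) ≤ ((p i).card : ℝ)) →
      (∀ i : Fin k, r ≤ (i : ℕ) →
        ((p i).card : ℝ) < ((p ⟨0, hk⟩).card : ℝ) ^ ((1 : ℝ) / 2)) →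
      (∀ x : Fin d → ℝ, x ∈ B ↔ x ∈ A ∧ ∀ i : Fin k, (i : ℕ) < r → x ∉ p i) →
      (B.card : ℝ) < ((p ⟨0, hk⟩).card : ℝ) ^ (-(1 : ℝ) / 2) * ((A + A).card : ℝ) ∧
      ((p ⟨0, hk⟩).card : ℝ) ^ (-(1 : ℝ) / 2) * ((A + A).card : ℝ) ≤
        C₁ ^ ((1 : ℝ) / 2) * c ^ 6 * (A.card : ℝ) ^ (1 - 1 / (2 * (s : ℝ))) := by
  classical
  refine ⟨1, fun d k r hk A B v _ a p hN hAA hinj hcov hp _ hP1 _ _ hsmall hB => ?_⟩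
  simp only [← Submodule.mkQ_span_singleton_eq_iff, ← Real.sqrt_eq_rpow] at hinj hcov hp hsmall
  set π := (Submodule.span ℝ {v}).mkQ
  set P := p ⟨0, hk⟩
  have hπa : Function.Injective (π ∘ a) := fun i j hij =>
    hinj (congrArg (fun y => {x | π x = y}) hij)
  have hAne : A.Nonempty := card_pos.1 hN
  have hP0 : (0 : ℝ) < #P :=
    (by positivity : (0 : ℝ) < C₁⁻¹ * #A ^ (1 / s : ℝ)).trans_le hP1
  set S := univ.filter fun j : Fin k => r ≤ j ∧ (p j).Nonempty
  have hBS : B ⊆ S.biUnion p := by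
    intro x hx
    obtain ⟨hxA, hxr⟩ := (hB x).1 hx
    obtain ⟨i, hi⟩ := hcov x hxA
    have hxi : x ∈ p i := (hp i x).2 ⟨hxA, hi⟩
    exact mem_biUnion.2
      ⟨i, mem_filter.2 ⟨mem_univ i, not_lt.1 fun h => hxr i h hxi, x, hxi⟩, hxi⟩
  have hSP : #S * #P ≤ #(A + A) :=
    card_mul_card_le_card_add_s18 π (fun x hx => ((hp _ x).1 hx).1)
      (fun j _ x hx => ((hp j x).1 hx).1) (fun x hx => ((hp _ x).1 hx).2)
      (fun j _ x hx => ((hp j x).1 hx).2) hπa.injOn (fun j hj => (mem_filter.1 hj).2.2)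
  have hmain : (#B : ℝ) * √(#P : ℝ) < #(A + A) :=
    card_mul_lt_of_subset_biUnion hBS (fun j hj => hsmall j (mem_filter.1 hj).2.1)
      (by exact_mod_cast (hAne.add hAne).card_pos)
      (by rw [Real.mul_self_sqrt hP0.le]; exact_mod_cast hSP)
  refine ⟨?_, Real.rpow_neg_half_mul_le hC₁ (by positivity) hP1 hAA (Nat.cast_nonneg _)⟩
  rwa [neg_div, Real.rpow_neg hP0.le, ← Real.sqrt_eq_rpow, inv_mul_eq_div,
    lt_div_iff₀ (Real.sqrt_pos.2 hP0)]

/-- Final counting step of Lemma 3.2: let `c, C₁ > 0` and `s ≥ 1`. For all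
sufficiently large `n = |A|` the following holds. Suppose `A ⊆ ℝ^d` is finite
with `|A + A| ≤ c⁶|A|`, and `A` is covered by distinct parallel lines
`l₁, …, l_k` (direction `v ≠ 0`, base points `a i`), with `pᵢ = A ∩ lᵢ`
satisfying `|p₁| ≥ … ≥ |p_k|` and `|p₁| ≥ C₁⁻¹ n^{1/s}`. Let `r` be maximal
with `|p_r| ≥ |p₁|^{1/2}` and set `B = A \ (l₁ ∪ … ∪ l_r)`. Then
`|B| < |p₁|^{−1/2}|A + A| ≤ C₁^{1/2} c⁶ n^{1 − 1/(2s)}`. -/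
theorem stmt18 (c C₁ : ℝ) (hc : 0 < c) (hC₁ : 0 < C₁) (s : ℕ) (hs : 1 ≤ s) :
    ∃ N : ℕ, ∀ (d k r : ℕ) (hk : 0 < k),
      ∀ (A B : Finset (Fin d → ℝ)) (v : Fin d → ℝ), v ≠ 0 →
      ∀ (a : Fin k → (Fin d → ℝ)) (p : Fin k → Finset (Fin d → ℝ)),
      N ≤ A.card →
      ((A + A).card : ℝ) ≤ c ^ 6 * A.card →
      (Function.Injective fun i : Fin k =>
        {x : Fin d → ℝ | ∃ t : ℝ, x = a i + t • v}) →
      (∀ x ∈ A, ∃ (i : Fin k) (t : ℝ), x = a i + t • v) →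
      (∀ (i : Fin k) (x : Fin d → ℝ),
        x ∈ p i ↔ x ∈ A ∧ ∃ t : ℝ, x = a i + t • v) →
      (∀ i j : Fin k, i ≤ j → (p j).card ≤ (p i).card) →
      C₁⁻¹ * (A.card : ℝ) ^ ((1 : ℝ) / s) ≤ ((p ⟨0, hk⟩).card : ℝ) →
      r ≤ k →
      (∀ i : Fin k, (i : ℕ) < r →
        ((p ⟨0, hk⟩).card : ℝ) ^ ((1 : ℝ) / 2) ≤ ((p i).card : ℝ)) →
      (∀ i : Fin k, r ≤ (i : ℕ) →
        ((p i).card : ℝ) < ((p ⟨0, hk⟩).card : ℝ) ^ ((1 : ℝ) / 2)) →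
      (∀ x : Fin d → ℝ, x ∈ B ↔ x ∈ A ∧ ∀ i : Fin k, (i : ℕ) < r → x ∉ p i) →
      (B.card : ℝ) < ((p ⟨0, hk⟩).card : ℝ) ^ (-(1 : ℝ) / 2) * ((A + A).card : ℝ) ∧
      ((p ⟨0, hk⟩).card : ℝ) ^ (-(1 : ℝ) / 2) * ((A + A).card : ℝ) ≤
        C₁ ^ ((1 : ℝ) / 2) * c ^ 6 * (A.card : ℝ) ^ (1 - 1 / (2 * (s : ℝ))) :=
  stmt18_general c C₁ hC₁ s
end
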